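/- arXiv:2005.11855 — 2 statements merged into one kernel-verified Lean document; each statement's English description precedes it below -/
import Mathlib

section
/- Let B be a finite connected graph with a group G acting by graph automorphisms, and suppose some vertex v0 is fixed by G. Let W be the set of G-pivot vertices of B. Then |W \ {v0}| ≤ β(B), where β(B) = |E| - |V| + 1 is the Betti number of B. -/
open SimpleGraph

/-- The automorphism group of a simple graph, as a subgroup of permutations. -/
def graphAut {V : Type*} (B : SimpleGraph V) : Subgroup (Equiv.Perm V) where
  carrier := {σ | ∀ a b : V, B.Adj (σ a) (σ b) ↔ B.Adj a b}
  one_mem' := by intro a b; rfl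
  mul_mem' := by
    intro σ τ hσ hτ a b
    simpa [Equiv.Perm.mul_apply] using (hσ (τ a) (τ b)).trans (hτ a b)
  inv_mem' := by
    intro σ hσ a b
    simpa using (hσ (σ⁻¹ a) (σ⁻¹ b)).symm

/-- `v` is a `G`-pivot vertex of the graph `B`: for every neighbour `w` of `v`, the orbit of `w`
under the stabilizer of `v` in `G` has even cardinality. -/
def IsPivot {V : Type*} (B : SimpleGraph V) (G : Type*) [Group G] [MulAction G V] (v : V) : Prop :=
  ∀ w : V, B.Adj v w → Even ((MulAction.orbit (MulAction.stabilizer G v) w).ncard)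

/-!
Use the distance `d` from `v0` as a height function; `G` preserves it because it fixes `v0`.
Every vertex `v ≠ v0` has a strictly lower neighbour, and a pivot `v ≠ v0` has two: the orbit of a
lower neighbour under the stabiliser of `v` has even size, so it contains a second one, again lower.
Distinct pairs (vertex, lower neighbour) give distinct edges, hence `(|V| - 1) + |W \ {v0}| ≤ |E|`.
-/

namespace SimpleGraph

variable {V W : Type*} {G : SimpleGraph V} {G' : SimpleGraph W}

theorem Hom.edist_le (f : G →g G') (u v : V) : G'.edist (f u) (f v) ≤ G.edist u v := by
  by_cases h : G.Reachable u v
  · obtain ⟨p, hp⟩ := h.exists_walk_length_eq_edist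
    calc G'.edist (f u) (f v) ≤ (p.map f).length := SimpleGraph.edist_le _
      _ = G.edist u v := by rw [Walk.length_map, hp]
  · rw [edist_eq_top_of_not_reachable h]
    exact le_top

theorem Iso.dist_eq (f : G ≃g G') (u v : V) : G'.dist (f u) (f v) = G.dist u v := by
  have hle : G.edist u v ≤ G'.edist (f u) (f v) := by
    simpa using Hom.edist_le f.symm.toHom (f u) (f v)
  have heq : G'.edist (f u) (f v) = G.edist u v := le_antisymm (Hom.edist_le f.toHom u v) hle
  rw [dist, dist, heq]

theorem Reachable.exists_adj_dist_lt {u v : V} (h : G.Reachable v u) (hne : v ≠ u) :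
    ∃ w, G.Adj v w ∧ G.dist u w < G.dist u v := by
  obtain ⟨p, hp⟩ := h.exists_walk_length_eq_dist
  cases p with
  | nil => exact absurd rfl hne
  | @cons _ w _ hadj q =>
    refine ⟨w, hadj, ?_⟩
    rw [dist_comm (u := u) (v := v), ← hp, dist_comm, Walk.length_cons]
    exact Nat.lt_succ_of_le (dist_le q)

def downNeighborFinset [Fintype V] [DecidableRel G.Adj] (f : V → ℕ) (v : V) : Finset V :=
  {w ∈ G.neighborFinset v | f w < f v}

@[simp]
theorem mem_downNeighborFinset [Fintype V] [DecidableRel G.Adj] {f : V → ℕ} {v w : V} :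
    w ∈ G.downNeighborFinset f v ↔ G.Adj v w ∧ f w < f v := by
  simp [downNeighborFinset]

theorem sum_card_downNeighborFinset_le [Fintype V] [DecidableEq V] [DecidableRel G.Adj]
    (f : V → ℕ) : ∑ v, (G.downNeighborFinset f v).card ≤ G.edgeFinset.card := by
  rw [← Finset.card_sigma]
  refine Finset.card_le_card_of_injOn (fun x => s(x.1, x.2)) ?_ ?_
  · rintro ⟨v, w⟩ hx
    simp_all [downNeighborFinset]
  · rintro ⟨v, w⟩ hx ⟨v', w'⟩ hx' he
    simp only [Finset.coe_sigma, Set.mem_sigma_iff, Finset.coe_univ, Set.mem_univ, true_and,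
      downNeighborFinset, Finset.coe_filter, mem_neighborFinset, Set.mem_ofPred_eq] at hx hx'
    rcases Sym2.eq_iff.1 (show s(v, w) = s(v', w') from he) with ⟨rfl, rfl⟩ | ⟨rfl, rfl⟩
    · rfl
    · omega

theorem Reachable.downNeighborFinset_dist_nonempty [Fintype V] [DecidableRel G.Adj] {u v : V}
    (h : G.Reachable v u) (hne : v ≠ u) : (G.downNeighborFinset (G.dist u) v).Nonempty := by
  obtain ⟨w, hw⟩ := h.exists_adj_dist_lt hne
  exact ⟨w, mem_downNeighborFinset.2 hw⟩

end SimpleGraph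

theorem MulAction.exists_smul_ne_of_even_ncard_orbit {M α : Type*} [Monoid M] [MulAction M α]
    {a : α} (h : Even (orbit M a).ncard) : ∃ m : M, m • a ≠ a := by
  by_contra! hfix
  have horbit : orbit M a = {a} :=
    Set.eq_singleton_iff_unique_mem.2 ⟨mem_orbit_self a, fun _ ⟨m, hm⟩ => hm ▸ hfix m⟩
  rw [horbit, Set.ncard_singleton] at h
  exact Nat.not_even_one h

theorem Finset.card_add_card_filter_le_sum {ι : Type*} {s : Finset ι} {p : ι → Prop}
    [DecidablePred p] {g : ι → ℕ} (h₁ : ∀ i ∈ s, 1 ≤ g i) (h₂ : ∀ i ∈ s, p i → 2 ≤ g i) :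
    s.card + {i ∈ s | p i}.card ≤ ∑ i ∈ s, g i := by
  rw [Finset.card_filter, Finset.card_eq_sum_ones, ← Finset.sum_add_distrib]
  refine Finset.sum_le_sum fun i hi => ?_
  split_ifs with hp
  · exact h₂ i hi hp
  · exact h₁ i hi

section Action

variable {V : Type*} {B : SimpleGraph V} {G : Type*} [Group G] [MulAction G V]

theorem SimpleGraph.dist_smul_smul (hact : ∀ (g : G) (a b : V), B.Adj a b → B.Adj (g • a) (g • b))
    (g : G) (u v : V) : B.dist (g • u) (g • v) = B.dist u v :=
  Iso.dist_eq (G := B) ⟨MulAction.toPerm g, ⟨fun h => by simpa using hact g⁻¹ _ _ h, hact g _ _⟩⟩ u v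

theorem IsPivot.one_lt_card_downNeighborFinset [Fintype V] [DecidableRel B.Adj]
    (hact : ∀ (g : G) (a b : V), B.Adj a b → B.Adj (g • a) (g • b))
    {v0 v : V} (hv0 : ∀ g : G, g • v0 = v0) (hpiv : IsPivot B G v) (hreach : B.Reachable v v0)
    (hne : v ≠ v0) : 1 < (B.downNeighborFinset (B.dist v0) v).card := by
  obtain ⟨w, hadj, hlt⟩ := hreach.exists_adj_dist_lt hne
  obtain ⟨⟨g, hg⟩, hgw⟩ := MulAction.exists_smul_ne_of_even_ncard_orbit (hpiv w hadj)
  have hgv : g • v = v := hg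
  refine Finset.one_lt_card.2 ⟨w, ?_, g • w, ?_, hgw.symm⟩
  · exact SimpleGraph.mem_downNeighborFinset.2 ⟨hadj, hlt⟩
  · refine SimpleGraph.mem_downNeighborFinset.2 ⟨hgv ▸ hact g v w hadj, ?_⟩
    rwa [← hv0 g, SimpleGraph.dist_smul_smul hact, hv0]

end Action

/-- If a group `G` acts on a finite connected graph `B` by graph automorphisms and fixes a
vertex `v0`, then the set `W` of `G`-pivot vertices satisfies `|W \ {v0}| ≤ β(B)`,
where `β(B) = |E| - |V| + 1`. -/
theorem stmt_1 {V : Type*} [Fintype V] (B : SimpleGraph V)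
    (G : Type*) [Group G] [MulAction G V]
    (hact : ∀ (g : G) (a b : V), B.Adj a b → B.Adj (g • a) (g • b))
    (hconn : B.Connected)
    (v0 : V) (hv0 : ∀ g : G, g • v0 = v0) :
    (({v : V | IsPivot B G v} \ {v0}).ncard : ℤ)
      ≤ (B.edgeSet.ncard : ℤ) - (Fintype.card V : ℤ) + 1 := by
  classical
  let down := B.downNeighborFinset (B.dist v0)
  have hcount := Finset.card_add_card_filter_le_sum (s := Finset.univ.erase v0)
    (p := IsPivot B G) (g := fun v => (down v).card)
    (fun v hv => Finset.card_pos.2 <|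
      (hconn v v0).downNeighborFinset_dist_nonempty (Finset.ne_of_mem_erase hv))
    (fun v hv hpiv => hpiv.one_lt_card_downNeighborFinset hact hv0 (hconn v v0)
      (Finset.ne_of_mem_erase hv))
  have hsum : ∑ v ∈ Finset.univ.erase v0, (down v).card ≤ ∑ v, (down v).card :=
    Finset.sum_le_sum_of_subset (Finset.erase_subset _ _)
  have hedges : ∑ v, (down v).card ≤ B.edgeFinset.card := B.sum_card_downNeighborFinset_le _
  have hpivots : {v : V | IsPivot B G v} \ {v0} = ↑{v ∈ Finset.univ.erase v0 | IsPivot B G v} := by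
    ext v; simp [and_comm]
  rw [hpivots, Set.ncard_coe_finset, ← B.coe_edgeFinset, Set.ncard_coe_finset]
  rw [Finset.card_erase_of_mem (Finset.mem_univ _), Finset.card_univ] at hcount
  have hV : 0 < Fintype.card V := Fintype.card_pos_iff.2 ⟨v0⟩
  omega
end

section
/- Let B be a finite connected graph with a group G acting by graph automorphisms, let W be the nonempty set of G-pivot vertices, and let d = min{|Gv| : v ∈ W}. Then |W| ≤ β(B) + 2d - 1. -/
open SimpleGraph

/-!
Fix a pivot `v` with `|Gv| = d` and let `D` be the distance to the orbit `Gv`, a `G`-invariant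
function. Every vertex outside `Gv` has a neighbour closer to `Gv`, and a pivot `u` outside `Gv`
has at least two: the stabilizer of `u` moves a closer neighbour within an orbit of even size, all
of whose members are closer neighbours too. As `Gv` consists of pivots, charging each edge to its
endpoint farther from `Gv` gives `|E| ≥ (|V| - d) + (|W| - d)`.
-/

open Finset

namespace SimpleGraph

variable {V : Type*}

/-- The distance from `u` to `S`, with junk value `0` when `S` is empty. -/
noncomputable def setDist (B : SimpleGraph V) (S : Set V) (u : V) : ℕ :=
  sInf (B.dist u '' S)

variable {B : SimpleGraph V} {S : Set V} {u : V}

lemma setDist_le {s : V} (hs : s ∈ S) : B.setDist S u ≤ B.dist u s :=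
  Nat.sInf_le ⟨s, hs, rfl⟩

lemma exists_dist_eq_setDist (hS : S.Nonempty) (u : V) :
    ∃ s ∈ S, B.dist u s = B.setDist S u :=
  Nat.sInf_mem (hS.image _)

lemma Connected.exists_adj_setDist_lt (hconn : B.Connected) (hS : S.Nonempty) (hu : u ∉ S) :
    ∃ w, B.Adj u w ∧ B.setDist S w < B.setDist S u := by
  obtain ⟨s, hs, hdist⟩ := exists_dist_eq_setDist (B := B) hS u
  obtain ⟨p, hp⟩ := hconn.exists_walk_length_eq_dist u s
  cases p with
  | nil => exact absurd hs hu
  | cons hadj q =>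
    refine ⟨_, hadj, ?_⟩
    have := (setDist_le hs).trans (dist_le q)
    rw [Walk.length_cons] at hp
    omega

section Counting

variable [Fintype V] [DecidableRel B.Adj] [Fintype B.edgeSet]
  {α : Type*} [Preorder α] [DecidableLT α]

/-- Orienting every edge downhill for `f` charges each edge to at most one endpoint. -/
lemma sum_card_adj_lt_le_card_edgeFinset (f : V → α) :
    ∑ u, #{w | B.Adj u w ∧ f w < f u} ≤ #B.edgeFinset := by
  calc ∑ u, #{w | B.Adj u w ∧ f w < f u}
      = #{p : V × V | B.Adj p.1 p.2 ∧ f p.2 < f p.1} := by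
        simp only [card_filter, Fintype.sum_prod_type]
    _ ≤ #B.edgeFinset := by
      refine card_le_card_of_injOn (fun p => s(p.1, p.2)) (fun p hp => ?_) ?_
      · simpa using (mem_filter.mp (mem_coe.mp hp)).2.1
      · rintro ⟨a, b⟩ hab ⟨c, d⟩ hcd h
        replace hab := (mem_filter.mp (mem_coe.mp hab)).2
        replace hcd := (mem_filter.mp (mem_coe.mp hcd)).2
        rcases Sym2.eq_iff.mp h with ⟨rfl, rfl⟩ | ⟨rfl, rfl⟩
        · rfl
        · exact absurd hab.2 hcd.2.not_gt

lemma card_add_card_le_card_edgeFinset_add (f : V → α) {S W : Finset V} (hSW : S ⊆ W)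
    (h_one : ∀ u ∉ S, ∃ w, B.Adj u w ∧ f w < f u)
    (h_two : ∀ u ∈ W, u ∉ S → 2 ≤ #{w | B.Adj u w ∧ f w < f u}) :
    Fintype.card V + #W ≤ #B.edgeFinset + 2 * #S := by
  classical
  have hpt : ∀ u, (if u ∈ Sᶜ then 1 else 0) + (if u ∈ W \ S then 1 else 0)
      ≤ #{w | B.Adj u w ∧ f w < f u} := by
    intro u
    by_cases hu : u ∈ S
    · simp [hu]
    by_cases huW : u ∈ W
    · simpa [hu, huW] using h_two u huW hu
    · obtain ⟨w, hw⟩ := h_one u hu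
      simpa [hu, huW] using card_pos.mpr ⟨w, by simpa using hw⟩
  have hsum := (sum_le_sum fun u _ => hpt u).trans (sum_card_adj_lt_le_card_edgeFinset f)
  simp only [sum_add_distrib, sum_boole, Nat.cast_id, filter_mem_eq_inter, univ_inter,
    card_compl, card_sdiff_of_subset hSW] at hsum
  have := card_le_card hSW
  have := card_le_univ W
  have := card_le_univ S
  omega

end Counting

end SimpleGraph

section Action

variable {V G : Type*} [Group G] [MulAction G V] {B : SimpleGraph V}

lemma SimpleGraph.dist_smul (hact : ∀ (g : G) (a b : V), B.Adj a b → B.Adj (g • a) (g • b))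
    (hconn : B.Connected) (g : G) (a b : V) : B.dist (g • a) (g • b) = B.dist a b := by
  have dist_smul_le : ∀ (g : G) (a b : V), B.dist (g • a) (g • b) ≤ B.dist a b := by
    intro g a b
    obtain ⟨p, hp⟩ := hconn.exists_walk_length_eq_dist a b
    simpa [hp] using dist_le (p.map ⟨(g • ·), hact g _ _⟩)
  refine (dist_smul_le g a b).antisymm ?_
  simpa using dist_smul_le g⁻¹ (g • a) (g • b)

lemma SimpleGraph.setDist_smul (hact : ∀ (g : G) (a b : V), B.Adj a b → B.Adj (g • a) (g • b))
    (hconn : B.Connected) {S : Set V} (hS : ∀ (g : G), ∀ s ∈ S, g • s ∈ S) (g : G) (u : V) :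
    B.setDist S (g • u) = B.setDist S u := by
  have setDist_smul_le : ∀ (g : G) (u : V), B.setDist S (g • u) ≤ B.setDist S u := by
    intro g u
    rcases S.eq_empty_or_nonempty with rfl | hne
    · simp [setDist]
    obtain ⟨s, hs, hdist⟩ := exists_dist_eq_setDist (B := B) hne u
    calc B.setDist S (g • u) ≤ B.dist (g • u) (g • s) := setDist_le (hS g s hs)
      _ = B.setDist S u := by rw [dist_smul hact hconn, hdist]
  refine (setDist_smul_le g u).antisymm ?_
  simpa using setDist_smul_le g⁻¹ (g • u)

open MulAction Pointwise in
lemma MulAction.smul_orbit_stabilizer (g : G) (u w : V) :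
    g • orbit (stabilizer G u) w = orbit (stabilizer G (g • u)) (g • w) := by
  ext x
  constructor
  · rintro ⟨_, ⟨⟨h, hh⟩, rfl⟩, rfl⟩
    refine ⟨⟨g * h * g⁻¹, ?_⟩, ?_⟩
    · simpa [mem_stabilizer_iff, mul_smul] using hh
    · simp [subgroup_smul_def, mul_smul]
  · rintro ⟨⟨h, hh⟩, rfl⟩
    refine ⟨(g⁻¹ * h * g) • w, ⟨⟨g⁻¹ * h * g, ?_⟩, rfl⟩, ?_⟩
    · simpa [mem_stabilizer_iff, mul_smul, inv_smul_eq_iff] using hh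
    · simp [subgroup_smul_def, mul_smul]

lemma IsPivot.smul (hact : ∀ (g : G) (a b : V), B.Adj a b → B.Adj (g • a) (g • b))
    {u : V} (hu : IsPivot B G u) (g : G) : IsPivot B G (g • u) := by
  intro w hw
  rw [← smul_inv_smul g w, ← MulAction.smul_orbit_stabilizer, Set.ncard_smul_set]
  exact hu _ (by simpa using hact g⁻¹ _ _ hw)

/-- The stabilizer of `u` moves `w` within an orbit of even, hence at least two, elements, all of
them downhill neighbours of `u`. -/
lemma IsPivot.two_le_card_adj_lt [Fintype V] [DecidableRel B.Adj] {α : Type*} [Preorder α]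
    [DecidableLT α] (hact : ∀ (g : G) (a b : V), B.Adj a b → B.Adj (g • a) (g • b))
    {f : V → α} (hf : ∀ (g : G) (x : V), f (g • x) = f x) {u w : V} (hu : IsPivot B G u)
    (hw : B.Adj u w) (hlt : f w < f u) : 2 ≤ #{x | B.Adj u x ∧ f x < f u} := by
  have hsub : MulAction.orbit (MulAction.stabilizer G u) w
      ⊆ ↑({x | B.Adj u x ∧ f x < f u} : Finset V) := by
    rintro _ ⟨⟨h, hh⟩, rfl⟩
    have hh : h • u = u := hh
    simp only [coe_filter, mem_univ, true_and]
    refine ⟨?_, ?_⟩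
    · simpa [hh] using hact h u w hw
    · simpa [MulAction.subgroup_smul_def, hf] using hlt
  have hpos : (MulAction.orbit (MulAction.stabilizer G u) w).ncard ≠ 0 :=
    (Set.ncard_pos (Set.toFinite _)).mpr (MulAction.nonempty_orbit w) |>.ne'
  have := Set.ncard_coe_finset _ ▸ Set.ncard_le_ncard hsub
  obtain ⟨k, hk⟩ := hu w hw
  omega

end Action

theorem stmt_3_general {V : Type*} [Fintype V] (B : SimpleGraph V)
    (G : Type*) [Group G] [MulAction G V]
    (hact : ∀ (g : G) (a b : V), B.Adj a b → B.Adj (g • a) (g • b))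
    (hconn : B.Connected)
    (d : ℕ)
    (hd : IsLeast {n : ℕ | ∃ v : V, IsPivot B G v ∧ n = (MulAction.orbit G v).ncard} d) :
    ({v : V | IsPivot B G v}.ncard : ℤ)
      ≤ ((B.edgeSet.ncard : ℤ) - (Fintype.card V : ℤ) + 1) + 2 * (d : ℤ) - 1 := by
  classical
  obtain ⟨⟨v, hv, rfl⟩, -⟩ := hd
  set O := MulAction.orbit G v
  have hO : O.Nonempty := MulAction.nonempty_orbit v
  have hD : ∀ (g : G) (u : V), B.setDist O (g • u) = B.setDist O u :=
    setDist_smul hact hconn (by rintro g _ ⟨h, rfl⟩; exact ⟨g * h, mul_smul g h v⟩)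
  have hOW : O.toFinset ⊆ {u | IsPivot B G u}.toFinset := by
    rintro _ hu
    obtain ⟨g, rfl⟩ := Set.mem_toFinset.mp hu
    exact Set.mem_toFinset.mpr (hv.smul hact g)
  have key := B.card_add_card_le_card_edgeFinset_add (B.setDist O) hOW
    (fun u hu => hconn.exists_adj_setDist_lt hO (by simpa using hu))
    (fun u hu hu' => by
      obtain ⟨w, hw, hlt⟩ := hconn.exists_adj_setDist_lt hO (by simpa using hu')
      exact (Set.mem_toFinset.mp hu).two_le_card_adj_lt hact hD hw hlt)
  rw [← coe_edgeFinset, Set.ncard_coe_finset, Set.ncard_eq_toFinset_card',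
    Set.ncard_eq_toFinset_card']
  omega

/-- If a group `G` acts on a finite connected graph `B` by graph automorphisms, the set `W` of
`G`-pivot vertices is nonempty, and `d = min {|Gv| : v ∈ W}`, then `|W| ≤ β(B) + 2d - 1`. -/
theorem stmt_3 {V : Type*} [Fintype V] (B : SimpleGraph V)
    (G : Type*) [Group G] [MulAction G V]
    (hact : ∀ (g : G) (a b : V), B.Adj a b → B.Adj (g • a) (g • b))
    (hconn : B.Connected)
    (hW : {v : V | IsPivot B G v}.Nonempty)
    (d : ℕ)
    (hd : IsLeast {n : ℕ | ∃ v : V, IsPivot B G v ∧ n = (MulAction.orbit G v).ncard} d) :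
    ({v : V | IsPivot B G v}.ncard : ℤ)
      ≤ ((B.edgeSet.ncard : ℤ) - (Fintype.card V : ℤ) + 1) + 2 * (d : ℤ) - 1 :=
  stmt_3_general B G hact hconn d hd
end
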